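/- arXiv:0708.3111 — 2 statements merged into one kernel-verified Lean document; each statement's English description precedes it below -/
import Mathlib

section
/- Let C be a clutter with the König property and without isolated vertices. Then C is unmixed if and only if there is a perfect matching e_1,…,e_g of König type such that for any two distinct edges e, e' of C and any two distinct vertices x ∈ e, y ∈ e' with {x, y} contained in some e_i, the set (e \ {x}) ∪ (e' \ {y}) contains an edge of C. -/
variable {V : Type} [Fintype V] [DecidableEq V]

/-- A clutter: a family of finsets (edges), none of which contains another. -/
def IsClutter (E : Set (Finset V)) : Prop :=
  ∀ e ∈ E, ∀ f ∈ E, e ⊆ f → e = f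

/-- A vertex cover: a set of vertices meeting every edge. -/
def IsVertexCover (E : Set (Finset V)) (C : Finset V) : Prop :=
  ∀ e ∈ E, (e ∩ C).Nonempty

/-- A minimal vertex cover. -/
def IsMinimalVertexCover (E : Set (Finset V)) (C : Finset V) : Prop :=
  IsVertexCover E C ∧ ∀ D ⊂ C, ¬ IsVertexCover E D

/-- The covering number: minimum cardinality of a vertex cover. -/
noncomputable def coveringNumber (E : Set (Finset V)) : ℕ :=
  sInf {n : ℕ | ∃ C : Finset V, IsVertexCover E C ∧ C.card = n}

/-- Unmixed: all minimal vertex covers have the same cardinality. -/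
def Unmixed (E : Set (Finset V)) : Prop :=
  ∀ C D : Finset V, IsMinimalVertexCover E C → IsMinimalVertexCover E D →
    C.card = D.card

/-- A matching: a set of pairwise disjoint edges. -/
def IsMatching (E : Set (Finset V)) (M : Finset (Finset V)) : Prop :=
  ↑M ⊆ E ∧ (M : Set (Finset V)).Pairwise Disjoint

/-- The König property: the maximum size of a matching equals the covering number. -/
def HasKonigProperty (E : Set (Finset V)) : Prop :=
  (∃ M : Finset (Finset V), IsMatching E M ∧ M.card = coveringNumber E) ∧
  ∀ M : Finset (Finset V), IsMatching E M → M.card ≤ coveringNumber E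

/-- A perfect matching of König type: pairwise disjoint edges `em 0, …, em (g-1)`
whose union is the whole vertex set, where `g` is the covering number. -/
def IsPerfectMatchingKT (E : Set (Finset V)) {g : ℕ} (em : Fin g → Finset V) : Prop :=
  (∀ i, em i ∈ E) ∧ (∀ i j, i ≠ j → Disjoint (em i) (em j)) ∧
  (∀ x : V, ∃ i, x ∈ em i) ∧ g = coveringNumber E

/-- An independent set: contains no edge. -/
def IsIndependentSet (E : Set (Finset V)) (F : Finset V) : Prop :=
  ∀ e ∈ E, ¬ e ⊆ F

/-- A facet of the independence complex: a maximal independent set. -/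
def IsFacet (E : Set (Finset V)) (F : Finset V) : Prop :=
  IsIndependentSet E F ∧ ∀ G : Finset V, IsIndependentSet E G → F ⊆ G → F = G

/-- The set of facets of the independence complex of a clutter. -/
def cFacets (E : Set (Finset V)) : Set (Finset V) := {F | IsFacet E F}

/-- `F : Fin s → Finset V` is a shelling order of the family of facets `Fac`. -/
def IsShelling {s : ℕ} (Fac : Set (Finset V)) (F : Fin s → Finset V) : Prop :=
  Function.Injective F ∧ (∀ G : Finset V, G ∈ Fac ↔ ∃ i, F i = G) ∧
  ∀ i j : Fin s, i < j →
    ∃ v ∈ F j \ F i, ∃ l : Fin s, l < j ∧ F j \ F l = {v}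

/-- A family of facets is shellable if it admits a shelling order. -/
def Shellable (Fac : Set (Finset V)) : Prop :=
  ∃ (s : ℕ) (F : Fin s → Finset V), IsShelling Fac F

/-- A family of facets is pure if all its members have the same cardinality. -/
def PureFamily (Fac : Set (Finset V)) : Prop :=
  ∀ F ∈ Fac, ∀ G ∈ Fac, F.card = G.card

/-- Pure shellable: pure and shellable. -/
def PureShellable (Fac : Set (Finset V)) : Prop :=
  PureFamily Fac ∧ Shellable Fac

/-- A free vertex: a vertex belonging to exactly one edge. -/
def HasFreeVertex (E : Set (Finset V)) : Prop :=
  ∃ x : V, ∃ e ∈ E, x ∈ e ∧ ∀ f ∈ E, x ∈ f → f = e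

/-- A cycle of length `r`: `r` distinct vertices and `r` distinct edges such that each
of the vertices lies in exactly two of the edges and each of the edges contains exactly
two of the vertices. -/
def HasCycleOfLength (E : Set (Finset V)) (r : ℕ) : Prop :=
  ∃ (v : Fin r → V) (f : Fin r → Finset V),
    Function.Injective v ∧ Function.Injective f ∧ (∀ j, f j ∈ E) ∧
    (∀ i : Fin r, (Finset.univ.filter (fun j => v i ∈ f j)).card = 2) ∧
    (∀ j : Fin r, (Finset.univ.filter (fun i => v i ∈ f j)).card = 2)

/-!
Two distinct vertices `x`, `y` lie in a common minimal vertex cover iff there are distinct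
edges `e ∋ x`, `e' ∋ y` with `(e \ {x}) ∪ (e' \ {y})` independent: each vertex `x` of a minimal
cover `C` has an edge `e` with `e ∩ C = {x}`, and conversely the complement of an independent
set contains a minimal cover. So the exchange condition says that no minimal cover meets an
`e_i` twice; as the `e_i` cover every vertex, all minimal covers then have size `g`.
Conversely, if all minimal covers have size `g`, each meets every edge of a maximum matching
(`g` disjoint edges, by the König property) exactly once and lies in their union; since every
vertex lies in some minimal cover, the matching is perfect.
-/

open Finset Function

section Transversal

variable {ι α : Type*} [Fintype ι] [DecidableEq α] {s : ι → Finset α} {C : Finset α}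

theorem Finset.card_le_of_forall_card_inter_le_one (hcov : ∀ x ∈ C, ∃ i, x ∈ s i)
    (h : ∀ i, #(s i ∩ C) ≤ 1) : #C ≤ Fintype.card ι :=
  calc #C ≤ #(univ.biUnion fun i => s i ∩ C) := card_le_card fun x hx => by
          obtain ⟨i, hi⟩ := hcov x hx
          exact mem_biUnion.2 ⟨i, mem_univ i, mem_inter.2 ⟨hi, hx⟩⟩
    _ ≤ ∑ i, #(s i ∩ C) := card_biUnion_le
    _ ≤ ∑ _i : ι, 1 := sum_le_sum fun i _ => h i
    _ = Fintype.card ι := by simp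

theorem Finset.sum_card_inter_le_card (hs : Pairwise (Disjoint on s)) (C : Finset α) :
    ∑ i, #(s i ∩ C) ≤ #C := by
  rw [← card_biUnion fun i _ j _ hij => (hs hij).mono inter_subset_left inter_subset_left]
  exact card_le_card (biUnion_subset.2 fun i _ => inter_subset_right)

theorem Finset.card_le_sum_card_inter (hC : ∀ i, (s i ∩ C).Nonempty) :
    Fintype.card ι ≤ ∑ i, #(s i ∩ C) := by
  simpa using sum_le_sum fun i (_ : i ∈ univ) => show 1 ≤ _ from (hC i).card_pos

theorem Finset.card_inter_eq_one_of_card_le (hs : Pairwise (Disjoint on s))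
    (hC : ∀ i, (s i ∩ C).Nonempty) (hcard : #C ≤ Fintype.card ι) (i : ι) :
    #(s i ∩ C) = 1 := by
  refine le_antisymm ?_ (hC i).card_pos
  by_contra! h
  have hlt : ∑ _j : ι, 1 < ∑ j, #(s j ∩ C) :=
    sum_lt_sum (fun j _ => show 1 ≤ _ from (hC j).card_pos) ⟨i, mem_univ i, h⟩
  have := sum_card_inter_le_card hs C
  simp only [sum_const, card_univ, smul_eq_mul, mul_one] at hlt
  omega

theorem Finset.exists_mem_of_card_le (hs : Pairwise (Disjoint on s))
    (hC : ∀ i, (s i ∩ C).Nonempty) (hcard : #C ≤ Fintype.card ι) {x : α} (hx : x ∈ C) :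
    ∃ i, x ∈ s i := by
  by_contra! hxs
  have herase : ∀ i, s i ∩ C.erase x = s i ∩ C := fun i => by
    rw [inter_erase, erase_eq_of_notMem fun h => hxs i (mem_inter.1 h).1]
  have hle := sum_card_inter_le_card hs (C.erase x)
  simp only [herase, card_erase_of_mem hx] at hle
  have := card_le_sum_card_inter hC
  have := card_pos.2 ⟨x, hx⟩
  omega

end Transversal

theorem IsMatching.exists_fin {α : Type} {E : Set (Finset α)} {M : Finset (Finset α)}
    (hM : IsMatching E M) :
    ∃ em : Fin #M → Finset α, (∀ i, em i ∈ E) ∧ ∀ i j, i ≠ j → Disjoint (em i) (em j) :=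
  ⟨fun i => M.equivFin.symm i, fun i => hM.1 (M.equivFin.symm i).2, fun i j hij =>
    hM.2 (M.equivFin.symm i).2 (M.equivFin.symm j).2 fun h =>
      hij (M.equivFin.symm.injective (Subtype.ext h))⟩

section VertexCover

variable {α : Type} [DecidableEq α] {E : Set (Finset α)} {B C : Finset α}

theorem coveringNumber_le_card (hC : IsVertexCover E C) : coveringNumber E ≤ #C :=
  Nat.sInf_le ⟨C, hC, rfl⟩

theorem IsVertexCover.exists_isMinimalVertexCover_subset (hC : IsVertexCover E C) :
    ∃ D ⊆ C, IsMinimalVertexCover E D := by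
  obtain ⟨D, hDC, hD⟩ := exists_minimal_le_of_wellFoundedLT _ C hC
  exact ⟨D, hDC, minimal_iff_forall_lt.1 hD⟩

theorem IsVertexCover.not_subset_of_disjoint (hC : IsVertexCover E C) (hCB : Disjoint C B)
    {f : Finset α} (hf : f ∈ E) : ¬ f ⊆ B := fun hfB => by
  obtain ⟨v, hv⟩ := hC f hf
  exact disjoint_left.1 hCB (mem_inter.1 hv).2 (hfB (mem_inter.1 hv).1)

theorem IsVertexCover.mem_of_disjoint_erase (hC : IsVertexCover E C) {e : Finset α}
    (he : e ∈ E) {x : α} (hCe : Disjoint C (e.erase x)) : x ∈ e ∧ x ∈ C := by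
  obtain ⟨v, hv⟩ := hC e he
  obtain ⟨hve, hvC⟩ := mem_inter.1 hv
  by_cases hvx : v = x
  · exact hvx ▸ ⟨hve, hvC⟩
  · exact absurd (mem_erase.2 ⟨hvx, hve⟩) (disjoint_left.1 hCe hvC)

theorem isVertexCover_compl [Fintype α] (hB : ∀ f ∈ E, ¬ f ⊆ B) : IsVertexCover E Bᶜ :=
  fun f hf => by
    obtain ⟨v, hvf, hvB⟩ := not_subset.1 (hB f hf)
    exact ⟨v, mem_inter.2 ⟨hvf, mem_compl.2 hvB⟩⟩

theorem exists_isMinimalVertexCover_disjoint [Fintype α] (hB : ∀ f ∈ E, ¬ f ⊆ B) :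
    ∃ C, IsMinimalVertexCover E C ∧ Disjoint C B := by
  obtain ⟨C, hCB, hC⟩ := (isVertexCover_compl hB).exists_isMinimalVertexCover_subset
  exact ⟨C, hC, disjoint_of_subset_left hCB disjoint_compl_left⟩

theorem IsMinimalVertexCover.exists_disjoint_erase (hC : IsMinimalVertexCover E C) {x : α}
    (hx : x ∈ C) : ∃ e ∈ E, x ∈ e ∧ Disjoint C (e.erase x) := by
  have hnot := hC.2 _ (erase_ssubset hx)
  simp only [IsVertexCover, not_forall, exists_prop, not_nonempty_iff_eq_empty] at hnot
  obtain ⟨e, he, heC⟩ := hnot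
  have hCe : Disjoint C (e.erase x) := disjoint_left.2 fun v hvC hve =>
    (eq_empty_iff_forall_notMem.1 heC) v
      (mem_inter.2 ⟨mem_of_mem_erase hve, mem_erase.2 ⟨ne_of_mem_erase hve, hvC⟩⟩)
  exact ⟨e, he, (hC.1.mem_of_disjoint_erase he hCe).1, hCe⟩

theorem exists_isMinimalVertexCover_mem [Fintype α] (hclut : IsClutter E) {e : Finset α}
    (he : e ∈ E) {x : α} (hx : x ∈ e) : ∃ C, IsMinimalVertexCover E C ∧ x ∈ C := by
  have hind : ∀ f ∈ E, ¬ f ⊆ e.erase x := fun f hf hfe => by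
    obtain rfl := hclut f hf e he (hfe.trans (erase_subset x e))
    exact notMem_erase x _ (hfe hx)
  obtain ⟨C, hC, hCe⟩ := exists_isMinimalVertexCover_disjoint hind
  exact ⟨C, hC, (hC.1.mem_of_disjoint_erase he hCe).2⟩

theorem exists_isMinimalVertexCover_mem_mem_iff [Fintype α] {x y : α} (hxy : x ≠ y) :
    (∃ C, IsMinimalVertexCover E C ∧ x ∈ C ∧ y ∈ C) ↔
      ∃ e ∈ E, ∃ e' ∈ E, e ≠ e' ∧ x ∈ e ∧ y ∈ e' ∧ ∀ f ∈ E, ¬ f ⊆ e.erase x ∪ e'.erase y := by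
  constructor
  · rintro ⟨C, hC, hxC, hyC⟩
    obtain ⟨e, he, hxe, hCe⟩ := hC.exists_disjoint_erase hxC
    obtain ⟨e', he', hye', hCe'⟩ := hC.exists_disjoint_erase hyC
    refine ⟨e, he, e', he', ?_, hxe, hye',
      fun f => hC.1.not_subset_of_disjoint (disjoint_union_right.2 ⟨hCe, hCe'⟩)⟩
    rintro rfl
    exact disjoint_left.1 hCe hyC (mem_erase.2 ⟨hxy.symm, hye'⟩)
  · rintro ⟨e, he, e', he', -, -, -, hB⟩
    obtain ⟨C, hC, hCB⟩ := exists_isMinimalVertexCover_disjoint hB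
    rw [disjoint_union_right] at hCB
    exact ⟨C, hC, (hC.1.mem_of_disjoint_erase he hCB.1).2, (hC.1.mem_of_disjoint_erase he' hCB.2).2⟩

theorem IsMinimalVertexCover.card_inter_le_one [Fintype α] (hC : IsMinimalVertexCover E C)
    {s : Finset α} (hs : ∀ e ∈ E, ∀ e' ∈ E, e ≠ e' → ∀ x ∈ e, ∀ y ∈ e', x ≠ y → x ∈ s → y ∈ s →
      ∃ f ∈ E, f ⊆ e.erase x ∪ e'.erase y) :
    #(s ∩ C) ≤ 1 := card_le_one.2 fun x hx y hy => by
  rw [mem_inter] at hx hy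
  by_contra hxy
  obtain ⟨e, he, e', he', hee', hxe, hye, hB⟩ :=
    (exists_isMinimalVertexCover_mem_mem_iff hxy).1 ⟨C, hC, hx.2, hy.2⟩
  obtain ⟨f, hf, hfB⟩ := hs e he e' he' hee' x hxe y hye hxy hx.1 hy.1
  exact hB f hf hfB

theorem not_empty_mem_of_hasKonigProperty (hk : HasKonigProperty E) : ∅ ∉ E := by
  intro h
  have hno : ∀ C, ¬ IsVertexCover E C := fun C hC => by simpa using hC ∅ h
  have hzero : coveringNumber E = 0 := by simp [coveringNumber, hno]
  have := hk.2 {∅} ⟨by simpa using h, by simp⟩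
  simp [hzero] at this

theorem exists_isMinimalVertexCover_card_eq_coveringNumber [Fintype α] (hempty : ∅ ∉ E) :
    ∃ C, IsMinimalVertexCover E C ∧ #C = coveringNumber E := by
  have hcov : IsVertexCover E (∅ : Finset α)ᶜ :=
    isVertexCover_compl fun f hf hf0 => hempty (subset_empty.1 hf0 ▸ hf)
  have hmem : coveringNumber E ∈ {n | ∃ C, IsVertexCover E C ∧ #C = n} :=
    Nat.sInf_mem ⟨_, _, hcov, rfl⟩
  obtain ⟨C, hC, hCcard⟩ := hmem
  obtain ⟨D, hDC, hD⟩ := hC.exists_isMinimalVertexCover_subset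
  exact ⟨D, hD, le_antisymm (hCcard ▸ card_le_card hDC) (coveringNumber_le_card hD.1)⟩

theorem Unmixed.card_eq_coveringNumber [Fintype α] (hE : Unmixed E) (hempty : ∅ ∉ E)
    (hC : IsMinimalVertexCover E C) : #C = coveringNumber E := by
  obtain ⟨D, hD, hDcard⟩ := exists_isMinimalVertexCover_card_eq_coveringNumber hempty
  exact hDcard ▸ hE C D hC hD

end VertexCover

/-- A clutter with the König property and without isolated vertices is
unmixed iff it has a perfect matching of König type satisfying the exchange condition. -/
theorem unmixed_iff_exchange_condition
    (E : Set (Finset V)) (hclut : IsClutter E)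
    (hkonig : HasKonigProperty E) (hnoiso : ∀ x : V, ∃ e ∈ E, x ∈ e) :
    Unmixed E ↔
      ∃ (g : ℕ) (em : Fin g → Finset V), IsPerfectMatchingKT E em ∧
        ∀ e ∈ E, ∀ e' ∈ E, e ≠ e' → ∀ x ∈ e, ∀ y ∈ e', x ≠ y →
          (∃ i, x ∈ em i ∧ y ∈ em i) →
          ∃ f ∈ E, f ⊆ e.erase x ∪ e'.erase y := by
  constructor
  · intro hunmix
    obtain ⟨M, hM, hMcard⟩ := hkonig.1
    obtain ⟨em, hemE, hdisj⟩ := hM.exists_fin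
    have hs : Pairwise (Disjoint on em) := fun i j => hdisj i j
    have hmeet (C) (hC : IsMinimalVertexCover E C) (i) : (em i ∩ C).Nonempty := hC.1 _ (hemE i)
    have hcard (C) (hC : IsMinimalVertexCover E C) : #C ≤ Fintype.card (Fin #M) := by
      simp [hunmix.card_eq_coveringNumber (not_empty_mem_of_hasKonigProperty hkonig) hC, hMcard]
    refine ⟨#M, em, ⟨hemE, hdisj, fun x => ?_, hMcard⟩, ?_⟩
    · obtain ⟨e, he, hxe⟩ := hnoiso x
      obtain ⟨C, hC, hxC⟩ := exists_isMinimalVertexCover_mem hclut he hxe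
      exact exists_mem_of_card_le hs (hmeet C hC) (hcard C hC) hxC
    · intro e he e' he' hee' x hxe y hye hxy ⟨i, hxi, hyi⟩
      by_contra! hB
      obtain ⟨C, hC, hxC, hyC⟩ := (exists_isMinimalVertexCover_mem_mem_iff hxy).2
        ⟨e, he, e', he', hee', hxe, hye, hB⟩
      have hone := card_inter_eq_one_of_card_le hs (hmeet C hC) (hcard C hC) i
      exact hxy (card_le_one.1 hone.le x (mem_inter.2 ⟨hxi, hxC⟩) y (mem_inter.2 ⟨hyi, hyC⟩))
  · rintro ⟨g, em, ⟨-, -, hcovV, rfl⟩, hexch⟩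
    have hcard (C) (hC : IsMinimalVertexCover E C) : #C = coveringNumber E := by
      have hone (i) : #(em i ∩ C) ≤ 1 := hC.card_inter_le_one fun e he e' he' hee' x hxe y hye hxy
        hx hy => hexch e he e' he' hee' x hxe y hye hxy ⟨i, hx, hy⟩
      refine le_antisymm ?_ (coveringNumber_le_card hC.1)
      simpa using card_le_of_forall_card_inter_le_one (fun x _ => hcovV x) hone
    exact fun C D hC hD => (hcard C hC).trans (hcard D hD).symm
end

section
/- Let C be a clutter with a perfect matching e_1,…,e_g of König type. If for any two edges f_1, f_2 of C and any edge e_i of the perfect matching one has f_1 ∩ e_i ⊆ f_2 ∩ e_i or f_2 ∩ e_i ⊆ f_1 ∩ e_i, then the independence complex Δ_C is pure shellable. -/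
variable {V : Type} [Fintype V] [DecidableEq V]

/-! The complement of a facet is a minimal vertex cover. The nesting condition forces a minimal
cover to meet each matching edge `em i` in exactly one vertex, so facets are exactly the
complements of transversals `p` (with `p i ∈ em i`) that cover `E`; in particular they all have
`|V| - g` elements. Inside each `em i`, order the vertices by decreasing degree: by nestedness
a vertex then lies in every edge through any later vertex. Sort the facets lexicographically by
the positions of their transversals. If `F` precedes `G` with transversals `p` and `q`, and `a`
is the first index with `p a` before `q a`, replacing `q a` by `p a` keeps a cover, giving an
earlier facet `H` with `G \ H = {p a}`. -/

open Finset Function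

section Covers

variable {E : Set (Finset V)} {F : Finset V}

theorem isIndependentSet_iff_isVertexCover_compl :
    IsIndependentSet E F ↔ IsVertexCover E Fᶜ := by
  simp only [IsIndependentSet, IsVertexCover, ← not_disjoint_iff_nonempty_inter,
    disjoint_compl_right_iff]

theorem isFacet_iff_isMinimalVertexCover_compl :
    IsFacet E F ↔ IsMinimalVertexCover E Fᶜ := by
  simp only [IsFacet, IsMinimalVertexCover, isIndependentSet_iff_isVertexCover_compl]
  refine and_congr_right fun _ => ⟨fun hmax D hD hDcov => ?_, fun hmin G hGcov hFG => ?_⟩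
  · have hFD : F ⊆ Dᶜ := subset_compl_comm.mp hD.subset
    exact hD.ne (by rw [hmax Dᶜ (by rwa [compl_compl]) hFD, compl_compl])
  · obtain hGF | hGF := (compl_subset_compl.mpr hFG).eq_or_ssubset
    · exact (compl_inj_iff.mp hGF).symm
    · exact absurd hGcov (hmin _ hGF)

end Covers

section MinimalCovers

variable {α : Type} [DecidableEq α] {E : Set (Finset α)} {C s : Finset α}

theorem IsMinimalVertexCover.exists_inter_eq_singleton (hC : IsMinimalVertexCover E C)
    {x : α} (hx : x ∈ C) : ∃ f ∈ E, f ∩ C = {x} := by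
  have hnot := hC.2 _ (erase_ssubset hx)
  simp only [IsVertexCover, not_forall, not_nonempty_iff_eq_empty, inter_erase,
    erase_eq_empty_iff] at hnot
  obtain ⟨f, hf, hfC⟩ := hnot
  exact ⟨f, hf, hfC.resolve_left (hC.1 f hf).ne_empty⟩

theorem IsMinimalVertexCover.exists_inter_eq_singleton_of_nested (hC : IsMinimalVertexCover E C)
    (hs : s ∈ E) (hnest : ∀ f₁ ∈ E, ∀ f₂ ∈ E, f₁ ∩ s ⊆ f₂ ∩ s ∨ f₂ ∩ s ⊆ f₁ ∩ s) :
    ∃ x, s ∩ C = {x} := by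
  obtain ⟨y, hy⟩ := hC.1 s hs
  refine ⟨y, (singleton_subset_iff.mpr hy).antisymm' fun z hz => ?_⟩
  rw [mem_inter] at hy hz
  obtain ⟨fz, hfz, hfzC⟩ := hC.exists_inter_eq_singleton hz.2
  obtain ⟨fy, hfy, hfyC⟩ := hC.exists_inter_eq_singleton hy.2
  have hzfz : z ∈ fz := (mem_inter.mp (hfzC ▸ mem_singleton_self z)).1
  have hyfy : y ∈ fy := (mem_inter.mp (hfyC ▸ mem_singleton_self y)).1
  rcases hnest fz hfz fy hfy with h | h
  · have hzfy : z ∈ fy := (mem_inter.mp (h (mem_inter.mpr ⟨hzfz, hz.1⟩))).1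
    exact hfyC ▸ mem_inter.mpr ⟨hzfy, hz.2⟩
  · have hyfz : y ∈ fz := (mem_inter.mp (h (mem_inter.mpr ⟨hyfy, hy.1⟩))).1
    have hyz : y = z := mem_singleton.mp (hfzC ▸ mem_inter.mpr ⟨hyfz, hy.2⟩)
    exact hyz ▸ mem_singleton_self y

end MinimalCovers

section Transversals

variable {α ι : Type} {em : ι → Finset α} {p : ι → α}

theorem injective_of_mem (hdisj : Pairwise (Disjoint on em)) (hp : ∀ i, p i ∈ em i) :
    Injective p := by
  intro i j hij
  by_contra hne
  exact disjoint_left.mp (hdisj hne) (hp i) (hij ▸ hp j)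

variable [DecidableEq α]

theorem inter_image_eq_singleton [Fintype ι] (hdisj : Pairwise (Disjoint on em))
    (hp : ∀ i, p i ∈ em i) (i : ι) : em i ∩ univ.image p = {p i} := by
  ext z
  simp only [mem_inter, mem_image, mem_univ, true_and, mem_singleton]
  refine ⟨fun ⟨hz, j, hj⟩ => ?_, fun hz => ⟨hz ▸ hp i, i, hz.symm⟩⟩
  subst hj
  by_contra hne
  exact disjoint_left.mp (hdisj fun hji => hne (congrArg p hji)) (hp j) hz

theorem mem_image_iff_eq_of_mem [Fintype ι] (hdisj : Pairwise (Disjoint on em))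
    (hp : ∀ i, p i ∈ em i) {i : ι} {x : α} (hx : x ∈ em i) : x ∈ univ.image p ↔ x = p i := by
  rw [← mem_singleton, ← inter_image_eq_singleton hdisj hp i, mem_inter, and_iff_right hx]

theorem eq_image_of_inter_eq_singleton [Fintype ι] (hcov : ∀ x, ∃ i, x ∈ em i) {C : Finset α}
    (hC : ∀ i, em i ∩ C = {p i}) : C = univ.image p := by
  ext x
  refine ⟨fun hx => ?_, fun hx => ?_⟩
  · obtain ⟨i, hi⟩ := hcov x
    have hxi : x ∈ em i ∩ C := mem_inter.mpr ⟨hi, hx⟩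
    rw [hC i, mem_singleton] at hxi
    exact mem_image.mpr ⟨i, mem_univ i, hxi.symm⟩
  · obtain ⟨i, -, rfl⟩ := mem_image.mp hx
    exact (mem_inter.mp ((hC i).symm ▸ mem_singleton_self (p i))).2

variable {E : Set (Finset α)}

theorem isMinimalVertexCover_image [Fintype ι] (hmE : ∀ i, em i ∈ E)
    (hdisj : Pairwise (Disjoint on em)) (hp : ∀ i, p i ∈ em i)
    (hcov : IsVertexCover E (univ.image p)) :
    IsMinimalVertexCover E (univ.image p) := by
  refine ⟨hcov, fun D hD hDcov => hD.2 fun x hx => ?_⟩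
  obtain ⟨i, -, rfl⟩ := mem_image.mp hx
  obtain ⟨z, hz⟩ := hDcov (em i) (hmE i)
  have hzi : z ∈ em i ∩ univ.image p := inter_subset_inter_left hD.1 hz
  rw [inter_image_eq_singleton hdisj hp, mem_singleton] at hzi
  exact hzi ▸ (mem_inter.mp hz).2

theorem isVertexCover_image_update [Fintype ι] [DecidableEq ι] {q : ι → α}
    (hq : IsVertexCover E (univ.image q)) {a : ι} {x : α} (hx : ∀ f ∈ E, q a ∈ f → x ∈ f) :
    IsVertexCover E (univ.image (update q a x)) := by
  intro f hf
  obtain ⟨z, hz⟩ := hq f hf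
  obtain ⟨hzf, hzq⟩ := mem_inter.mp hz
  obtain ⟨b, -, rfl⟩ := mem_image.mp hzq
  by_cases hb : b = a
  · subst hb
    exact ⟨x, mem_inter.mpr ⟨hx f hf hzf, mem_image.mpr ⟨b, mem_univ b, update_self b x q⟩⟩⟩
  · exact ⟨q b, mem_inter.mpr ⟨hzf, mem_image.mpr ⟨b, mem_univ b, update_of_ne hb x q⟩⟩⟩

theorem image_update_sdiff_image [Fintype ι] [DecidableEq ι] {q : ι → α} {a : ι} {x : α}
    (hx : x ∉ univ.image q) : univ.image (update q a x) \ univ.image q = {x} := by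
  ext z
  simp only [mem_sdiff, mem_image, mem_univ, true_and, mem_singleton, not_exists] at hx ⊢
  refine ⟨fun ⟨⟨b, hb⟩, hzq⟩ => ?_, fun hz => ⟨⟨a, by rw [update_self, hz]⟩, hz ▸ hx⟩⟩
  by_cases hba : b = a
  · rw [← hb, hba, update_self]
  · exact absurd (update_of_ne hba x q ▸ hb) (hzq b)

end Transversals

section Facets

variable {E : Set (Finset V)} {g : ℕ} {em : Fin g → Finset V}

theorem isFacet_iff_exists_transversal (hmE : ∀ i, em i ∈ E)
    (hdisj : Pairwise (Disjoint on em)) (hcov : ∀ x, ∃ i, x ∈ em i)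
    (hnest : ∀ f₁ ∈ E, ∀ f₂ ∈ E, ∀ i, f₁ ∩ em i ⊆ f₂ ∩ em i ∨ f₂ ∩ em i ⊆ f₁ ∩ em i)
    {F : Finset V} :
    IsFacet E F ↔ ∃ p : Fin g → V, (∀ i, p i ∈ em i) ∧ IsVertexCover E (univ.image p) ∧
      F = (univ.image p)ᶜ := by
  rw [isFacet_iff_isMinimalVertexCover_compl]
  refine ⟨fun hF => ?_, fun ⟨p, hp, hpcov, hFp⟩ => ?_⟩
  · choose p hp using fun i =>
      hF.exists_inter_eq_singleton_of_nested (hmE i) fun f₁ h₁ f₂ h₂ => hnest f₁ h₁ f₂ h₂ i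
    have hFp := eq_image_of_inter_eq_singleton hcov hp
    refine ⟨p, fun i => (mem_inter.mp ((hp i).symm ▸ mem_singleton_self (p i))).1, ?_, ?_⟩
    · exact hFp ▸ hF.1
    · rw [← hFp, compl_compl]
  · rw [hFp, compl_compl]
    exact isMinimalVertexCover_image hmE hdisj hp hpcov

theorem pureFamily_cFacets (hmE : ∀ i, em i ∈ E) (hdisj : Pairwise (Disjoint on em))
    (hcov : ∀ x, ∃ i, x ∈ em i)
    (hnest : ∀ f₁ ∈ E, ∀ f₂ ∈ E, ∀ i, f₁ ∩ em i ⊆ f₂ ∩ em i ∨ f₂ ∩ em i ⊆ f₁ ∩ em i) :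
    PureFamily (cFacets E) := by
  suffices hcard : ∀ F ∈ cFacets E, #Fᶜ = g by
    intro F hF G hG
    have hF' := card_compl_add_card F
    have hG' := card_compl_add_card G
    rw [hcard F hF] at hF'
    rw [hcard G hG] at hG'
    omega
  intro F hF
  obtain ⟨p, hp, -, rfl⟩ := (isFacet_iff_exists_transversal hmE hdisj hcov hnest).mp hF
  rw [compl_compl, card_image_of_injective _ (injective_of_mem hdisj hp), card_univ,
    Fintype.card_fin]

end Facets

section Dominance

variable {α : Type} {E : Set (Finset α)}

theorem mem_of_ncard_le_of_nested [DecidableEq α] [Finite α] {s : Finset α}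
    (hnest : ∀ f₁ ∈ E, ∀ f₂ ∈ E, f₁ ∩ s ⊆ f₂ ∩ s ∨ f₂ ∩ s ⊆ f₁ ∩ s)
    {x y : α} (hx : x ∈ s) (hy : y ∈ s) (hdeg : {f ∈ E | y ∈ f}.ncard ≤ {f ∈ E | x ∈ f}.ncard)
    {f : Finset α} (hf : f ∈ E) (hyf : y ∈ f) : x ∈ f := by
  by_contra hxf
  have hsub : {f ∈ E | x ∈ f} ⊆ {f ∈ E | y ∈ f} := fun f' ⟨hf', hxf'⟩ => by
    refine ⟨hf', ?_⟩
    rcases hnest f' hf' f hf with h | h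
    · exact absurd (mem_inter.mp (h (mem_inter.mpr ⟨hxf', hx⟩))).1 hxf
    · exact (mem_inter.mp (h (mem_inter.mpr ⟨hyf, hy⟩))).1
  have hssub : {f ∈ E | x ∈ f} ⊂ {f ∈ E | y ∈ f} :=
    (Set.ssubset_iff_of_subset hsub).mpr ⟨f, ⟨hf, hyf⟩, fun h => hxf h.2⟩
  exact (Set.ncard_lt_ncard hssub).not_ge hdeg

variable [Fintype α]

noncomputable def dominanceKey (E : Set (Finset α)) (x : α) :
    Lex (ℕᵒᵈ × Fin (Fintype.card α)) :=
  toLex (OrderDual.toDual {f ∈ E | x ∈ f}.ncard, Fintype.equivFin α x)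

theorem dominanceKey_injective : Injective (dominanceKey E) := fun _ _ h =>
  (Fintype.equivFin α).injective (congrArg Prod.snd (toLex.injective h))

theorem mem_of_dominanceKey_lt [DecidableEq α] {s : Finset α}
    (hnest : ∀ f₁ ∈ E, ∀ f₂ ∈ E, f₁ ∩ s ⊆ f₂ ∩ s ∨ f₂ ∩ s ⊆ f₁ ∩ s)
    {x y : α} (hx : x ∈ s) (hy : y ∈ s) (hxy : dominanceKey E x < dominanceKey E y)
    {f : Finset α} (hf : f ∈ E) (hyf : y ∈ f) : x ∈ f := by
  refine mem_of_ncard_le_of_nested hnest hx hy ?_ hf hyf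
  rcases Prod.Lex.toLex_lt_toLex.mp hxy with h | ⟨h, -⟩
  · exact (OrderDual.toDual_lt_toDual.mp h).le
  · exact (OrderDual.toDual_inj.mp h).ge

end Dominance

section Shelling

theorem shellable_of_key {α : Type} [LinearOrder α] {Fac : Set (Finset V)} (key : Finset V → α)
    (hkey : Set.InjOn key Fac)
    (hstep : ∀ F ∈ Fac, ∀ G ∈ Fac, key F < key G →
      ∃ v ∈ G \ F, ∃ H ∈ Fac, key H < key G ∧ G \ H = {v}) :
    Shellable Fac := by
  let K := (Set.toFinite (key '' Fac)).toFinset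
  let e := K.orderIsoOfFin rfl
  let F : Fin K.card → Finset V := fun i => invFunOn key Fac (e i)
  have hmemK : ∀ i, (e i : α) ∈ key '' Fac := fun i => (Set.Finite.mem_toFinset _).mp (e i).2
  have hF : ∀ i, F i ∈ Fac := fun i => invFunOn_mem (hmemK i)
  have hkeyF : ∀ i, key (F i) = e i := fun i => invFunOn_eq (hmemK i)
  have hlt : ∀ {i j}, key (F i) < key (F j) ↔ i < j := by
    intro i j
    rw [hkeyF, hkeyF, Subtype.coe_lt_coe, e.lt_iff_lt]
  have hsurj : ∀ G, G ∈ Fac ↔ ∃ i, F i = G := by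
    refine fun G => ⟨fun hG => ?_, fun ⟨i, hi⟩ => hi ▸ hF i⟩
    obtain ⟨i, hi⟩ := e.surjective ⟨key G, (Set.Finite.mem_toFinset _).mpr ⟨G, hG, rfl⟩⟩
    exact ⟨i, hkey (hF i) hG (by rw [hkeyF, hi])⟩
  refine ⟨K.card, F, fun i j hij => ?_, hsurj, fun i j hij => ?_⟩
  · exact e.injective (Subtype.ext (by rw [← hkeyF, ← hkeyF, hij]))
  · obtain ⟨v, hv, H, hH, hHlt, hHv⟩ := hstep _ (hF i) _ (hF j) (hlt.mpr hij)
    obtain ⟨l, rfl⟩ := (hsurj H).mp hH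
    exact ⟨v, hv, l, hlt.mp hHlt, hHv⟩

variable {α : Type} [LinearOrder α] {g : ℕ}

/-- On a facet `(univ.image p)ᶜ` the set `em i ∩ Fᶜ` is `{p i}`, so the `min` is just the key
of `p i`. -/
noncomputable def transversalKey (vkey : V → α) (em : Fin g → Finset V) (F : Finset V) :
    Lex (Fin g → WithTop α) :=
  toLex fun i => ((em i ∩ Fᶜ).image vkey).min

variable {vkey : V → α} {em : Fin g → Finset V}

theorem transversalKey_compl_image (hdisj : Pairwise (Disjoint on em)) {p : Fin g → V}
    (hp : ∀ i, p i ∈ em i) :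
    transversalKey vkey em (univ.image p)ᶜ = toLex fun i => (vkey (p i) : WithTop α) := by
  simp only [transversalKey, compl_compl, inter_image_eq_singleton hdisj hp, image_singleton,
    min_singleton]

variable {E : Set (Finset V)}

theorem shellable_cFacets (hmE : ∀ i, em i ∈ E) (hdisj : Pairwise (Disjoint on em))
    (hcov : ∀ x, ∃ i, x ∈ em i)
    (hnest : ∀ f₁ ∈ E, ∀ f₂ ∈ E, ∀ i, f₁ ∩ em i ⊆ f₂ ∩ em i ∨ f₂ ∩ em i ⊆ f₁ ∩ em i)
    (hvkey : Injective vkey)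
    (hdom : ∀ i, ∀ x ∈ em i, ∀ y ∈ em i, vkey x < vkey y → ∀ f ∈ E, y ∈ f → x ∈ f) :
    Shellable (cFacets E) := by
  have hfacet := fun F => isFacet_iff_exists_transversal (F := F) hmE hdisj hcov hnest
  refine shellable_of_key (transversalKey vkey em) (fun F hF G hG hFG => ?_)
    (fun F hF G hG hFG => ?_)
  · obtain ⟨p, hp, -, rfl⟩ := (hfacet F).mp hF
    obtain ⟨q, hq, -, rfl⟩ := (hfacet G).mp hG
    rw [transversalKey_compl_image hdisj hp, transversalKey_compl_image hdisj hq] at hFG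
    have hpq : p = q := funext fun i =>
      hvkey (WithTop.coe_injective (congrFun (toLex.injective hFG) i))
    rw [hpq]
  · obtain ⟨p, hp, -, rfl⟩ := (hfacet F).mp hF
    obtain ⟨q, hq, hqcov, rfl⟩ := (hfacet G).mp hG
    rw [transversalKey_compl_image hdisj hp, transversalKey_compl_image hdisj hq] at hFG
    obtain ⟨a, -, hlt⟩ := hFG
    have hlt : vkey (p a) < vkey (q a) := WithTop.coe_lt_coe.mp hlt
    have hpa : p a ∉ univ.image q := fun h =>
      hlt.ne (congrArg vkey ((mem_image_iff_eq_of_mem hdisj hq (hp a)).mp h))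
    set r := update q a (p a) with hr_def
    have hr : ∀ i, r i ∈ em i :=
      (forall_update_iff q fun i x => x ∈ em i).mpr ⟨hp a, fun i _ => hq i⟩
    have hrcov : IsVertexCover E (univ.image r) :=
      isVertexCover_image_update hqcov (hdom a _ (hp a) _ (hq a) hlt)
    refine ⟨p a, ?_, _, (hfacet _).mpr ⟨r, hr, hrcov, rfl⟩, ?_, ?_⟩
    · rw [compl_sdiff_compl]
      exact mem_sdiff.mpr ⟨mem_image_of_mem p (mem_univ a), hpa⟩
    · rw [transversalKey_compl_image hdisj hr, transversalKey_compl_image hdisj hq]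
      refine ⟨a, fun b hb => ?_, ?_⟩
      · simp only [hr_def, Pi.toLex_apply, update_of_ne hb.ne]
      · simpa only [hr_def, Pi.toLex_apply, update_self] using WithTop.coe_lt_coe.mpr hlt
    · rw [compl_sdiff_compl, image_update_sdiff_image hpa]

end Shelling

theorem ordering_implies_pure_shellable_general
    (E : Set (Finset V))
    {g : ℕ} (em : Fin g → Finset V) (hpm : IsPerfectMatchingKT E em)
    (hord : ∀ f₁ ∈ E, ∀ f₂ ∈ E, ∀ i : Fin g,
      f₁ ∩ em i ⊆ f₂ ∩ em i ∨ f₂ ∩ em i ⊆ f₁ ∩ em i) :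
    PureShellable (cFacets E) := by
  obtain ⟨hmE, hdisj, hcov, -⟩ := hpm
  exact ⟨pureFamily_cFacets hmE hdisj hcov hord,
    shellable_cFacets hmE hdisj hcov hord dominanceKey_injective fun i _ hx _ hy =>
      mem_of_dominanceKey_lt (fun f₁ h₁ f₂ h₂ => hord f₁ h₁ f₂ h₂ i) hx hy⟩

/-- For a clutter with a perfect matching of König type, the ordering
condition on intersections with the matching edges implies that the independence
complex is pure shellable. -/
theorem ordering_implies_pure_shellable
    (E : Set (Finset V)) (hclut : IsClutter E)
    {g : ℕ} (em : Fin g → Finset V) (hpm : IsPerfectMatchingKT E em)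
    (hord : ∀ f₁ ∈ E, ∀ f₂ ∈ E, ∀ i : Fin g,
      f₁ ∩ em i ⊆ f₂ ∩ em i ∨ f₂ ∩ em i ⊆ f₁ ∩ em i) :
    PureShellable (cFacets E) :=
  ordering_implies_pure_shellable_general E em hpm hord
end
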